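/- Under the combinatorial-sum setup, assume the centering condition (10) and the Bernstein-type condition (bern) with constants M_n, D. Define b_{nij}(z) = e^{−z²/(2n)} E e^{z X_{nij}/√B_n} − 1. Then there exists a constant C₃ > 0 depending only on D such that for every complex z with |z| ≤ min{√n, √B_n/M_n}/8, |Σ_{i,j=1}^n b_{nij}(z)| ≤ C₃ |z|³ √n (1 + (1/(√n B_n^{3/2})) Σ_{i,j=1}^n E|X_{nij}|³). -/

import Mathlib

/-!
With `c = z / √B`, the Bernstein condition for `s = 3` bounds the remainder of the second-order
expansion `E e^{cX} = 1 + c E X + c² E X² / 2 + R` by `|R| ≤ 2 D |c|³ E|X|³` as soon as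
`|c| M < 1/2`; the condition for `s = 1` controls the even moments and hence, by Cauchy–Schwarz,
`E|X|^k ≤ const · (2M)^k k!`, which justifies integrating the exponential series term by term.
Summing over the `n²` entries, the linear terms cancel by the centering condition and the quadratic
ones add up to `n² w` with `w = z² / (2n)`, so the Gaussian factor leaves
`n² ((1 + w) e^{-w} - 1) = O(n² |w|²) = O(|z|⁴)`, which is `O(|z|³ √n)` for `|z| ≤ √n / 8`.
-/

open MeasureTheory Real

theorem Nat.factorial_two_mul_le_four_pow_mul_sq (k : ℕ) :
    (2 * k).factorial ≤ 4 ^ k * k.factorial ^ 2 := by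
  have h := Nat.choose_mul_factorial_mul_factorial (n := 2 * k) (k := k) (by omega)
  rw [show 2 * k - k = k by omega, ← Nat.centralBinom_eq_two_mul_choose] at h
  rw [← h, mul_assoc, sq]
  exact Nat.mul_le_mul_right _ (Nat.centralBinom_le_four_pow k)

section Moments

variable {Ω : Type*} [MeasurableSpace Ω] {μ : Measure Ω} {X : Ω → ℝ}

theorem sq_integral_le_integral_sq [IsProbabilityMeasure μ] (hX : AEStronglyMeasurable X μ)
    (hX2 : Integrable (fun ω => X ω ^ 2) μ) : (∫ ω, X ω ∂μ) ^ 2 ≤ ∫ ω, X ω ^ 2 ∂μ := by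
  have h := ProbabilityTheory.variance_nonneg X μ
  rw [ProbabilityTheory.variance_eq_sub ((memLp_two_iff_integrable_sq hX).2 hX2)] at h
  simpa [sub_nonneg] using h

theorem sq_integral_abs_pow_le_of_bernstein [IsProbabilityMeasure μ]
    (hint : ∀ k : ℕ, Integrable (fun ω => |X ω| ^ k) μ) {D M : ℝ} (hD : 0 ≤ D) (hM : 0 < M)
    (hb₁ : ∀ k : ℕ, 1 ≤ k →
      |∫ ω, X ω ^ k ∂μ| ≤ D * k.factorial * M ^ (k - 1) * ∫ ω, |X ω| ∂μ) {k : ℕ} (hk : 1 ≤ k) :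
    (∫ ω, |X ω| ^ k ∂μ) ^ 2 ≤ D * (∫ ω, |X ω| ∂μ) / M * ((2 * M) ^ k * k.factorial) ^ 2 := by
  have hMpow : M ^ (2 * k) = M ^ (2 * k - 1) * M := by
    rw [← pow_succ]; congr 1; omega
  have hfact : ((2 * k).factorial : ℝ) ≤ 4 ^ k * (k.factorial : ℝ) ^ 2 := by
    exact_mod_cast Nat.factorial_two_mul_le_four_pow_mul_sq k
  calc (∫ ω, |X ω| ^ k ∂μ) ^ 2 ≤ ∫ ω, (|X ω| ^ k) ^ 2 ∂μ := by
        refine sq_integral_le_integral_sq (hint k).aestronglyMeasurable ?_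
        simpa only [← pow_mul, mul_comm 2 k] using hint (2 * k)
    _ = |∫ ω, X ω ^ (2 * k) ∂μ| := by
        simp_rw [← pow_mul, mul_comm k 2, (even_two_mul k).pow_abs]
        exact (abs_of_nonneg (integral_nonneg fun ω => (even_two_mul k).pow_nonneg _)).symm
    _ ≤ D * (2 * k).factorial * M ^ (2 * k - 1) * ∫ ω, |X ω| ∂μ := hb₁ (2 * k) (by omega)
    _ ≤ D * (4 ^ k * (k.factorial : ℝ) ^ 2) * M ^ (2 * k - 1) * ∫ ω, |X ω| ∂μ := by gcongr
    _ = D * (∫ ω, |X ω| ∂μ) / M * ((2 * M) ^ k * k.factorial) ^ 2 := by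
        have h4 : ((2 * M) ^ k) ^ 2 = 4 ^ k * (M ^ (2 * k - 1) * M) := by
          rw [← hMpow, ← pow_mul, mul_comm k 2, mul_pow, pow_mul]
          norm_num
        rw [mul_pow, h4]
        field_simp

theorem integral_abs_pow_le_of_bernstein [IsProbabilityMeasure μ]
    (hint : ∀ k : ℕ, Integrable (fun ω => |X ω| ^ k) μ) {D M : ℝ} (hD : 0 ≤ D) (hM : 0 < M)
    (hb₁ : ∀ k : ℕ, 1 ≤ k →
      |∫ ω, X ω ^ k ∂μ| ≤ D * k.factorial * M ^ (k - 1) * ∫ ω, |X ω| ∂μ) (k : ℕ) :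
    ∫ ω, |X ω| ^ k ∂μ ≤ (1 + D * (∫ ω, |X ω| ∂μ) / M) * ((2 * M) ^ k * k.factorial) := by
  set A := D * (∫ ω, |X ω| ∂μ) / M
  have hA : 0 ≤ A := by positivity
  rcases Nat.eq_zero_or_pos k with rfl | hk
  · simpa using hA
  have hsq := sq_integral_abs_pow_le_of_bernstein hint hD hM hb₁ hk
  set T := (2 * M) ^ k * k.factorial
  have hT : 0 ≤ T := by positivity
  have hE : 0 ≤ ∫ ω, |X ω| ^ k ∂μ := integral_nonneg fun ω => by positivity
  by_contra! hlt
  nlinarith [mul_lt_mul'' hlt hlt (by positivity) (by positivity), sq_nonneg (A * T), sq_nonneg T]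

theorem hasSum_integral_cexp_mul (hX : AEStronglyMeasurable X μ)
    (hint : ∀ k : ℕ, Integrable (fun ω => |X ω| ^ k) μ) (c : ℂ)
    (hs : Summable fun k : ℕ => ‖c‖ ^ k / k.factorial * ∫ ω, |X ω| ^ k ∂μ) :
    HasSum (fun k : ℕ => c ^ k * ((∫ ω, X ω ^ k ∂μ : ℝ) : ℂ) / k.factorial)
      (∫ ω, Complex.exp (c * X ω) ∂μ) := by
  set F : ℕ → Ω → ℂ := fun k ω => (c * X ω) ^ k / k.factorial
  have hF_norm : ∀ k ω, ‖F k ω‖ = ‖c‖ ^ k / k.factorial * |X ω| ^ k := fun k ω => by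
    simp [F, mul_pow, div_eq_mul_inv]; ring
  have hF_int : ∀ k, Integrable (F k) μ := fun k =>
    ((hint k).const_mul _).mono' (by fun_prop) (ae_of_all _ fun ω => (hF_norm k ω).le)
  have hF_sum : Summable fun k => ∫ ω, ‖F k ω‖ ∂μ := by
    simpa only [hF_norm, integral_const_mul] using hs
  have hF_integral : ∀ k, ∫ ω, F k ω ∂μ = c ^ k * ((∫ ω, X ω ^ k ∂μ : ℝ) : ℂ) / k.factorial :=
    fun k => by
      rw [← integral_complex_ofReal, ← integral_const_mul, ← integral_div]
      simp [F, mul_pow]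
  have hF_tsum : ∀ ω, ∑' k, F k ω = Complex.exp (c * X ω) := fun ω => by
    simp [F, Complex.exp_eq_exp_ℂ, NormedSpace.exp_eq_tsum_div]
  simpa only [hF_integral, hF_tsum] using hasSum_integral_of_summable_integral_norm hF_int hF_sum

theorem norm_integral_cexp_mul_sub_taylor_le [IsProbabilityMeasure μ]
    (hX : AEStronglyMeasurable X μ) (hint : ∀ k : ℕ, Integrable (fun ω => |X ω| ^ k) μ)
    {D M : ℝ} (hD : 0 ≤ D) (hM : 0 < M) {c : ℂ} (hc : ‖c‖ * M < 1 / 2)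
    (hb₁ : ∀ k : ℕ, 1 ≤ k →
      |∫ ω, X ω ^ k ∂μ| ≤ D * k.factorial * M ^ (k - 1) * ∫ ω, |X ω| ∂μ)
    (hb₃ : ∀ k : ℕ, 3 ≤ k →
      |∫ ω, X ω ^ k ∂μ| ≤ D * k.factorial * M ^ (k - 3) * ∫ ω, |X ω| ^ 3 ∂μ) :
    ‖∫ ω, Complex.exp (c * X ω) ∂μ - (1 + c * (∫ ω, X ω ∂μ : ℝ) + c ^ 2 * (∫ ω, X ω ^ 2 ∂μ : ℝ) / 2)‖
      ≤ 2 * D * ‖c‖ ^ 3 * ∫ ω, |X ω| ^ 3 ∂μ := by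
  set f : ℕ → ℂ := fun k => c ^ k * ((∫ ω, X ω ^ k ∂μ : ℝ) : ℂ) / k.factorial
  set q := ‖c‖ * M
  have hq : 0 ≤ q := by positivity
  set a := D * ‖c‖ ^ 3 * ∫ ω, |X ω| ^ 3 ∂μ
  have ha : 0 ≤ a := by positivity
  have hf : HasSum f (∫ ω, Complex.exp (c * X ω) ∂μ) := by
    refine hasSum_integral_cexp_mul hX hint c ?_
    set A := D * (∫ ω, |X ω| ∂μ) / M
    refine .of_nonneg_of_le (fun k => by positivity) (fun k => ?_)
      ((summable_geometric_of_lt_one (r := 2 * q) (by positivity) (by linarith)).mul_left (1 + A))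
    calc ‖c‖ ^ k / k.factorial * ∫ ω, |X ω| ^ k ∂μ
        ≤ ‖c‖ ^ k / k.factorial * ((1 + A) * ((2 * M) ^ k * k.factorial)) := by
          gcongr; exact integral_abs_pow_le_of_bernstein hint hD hM hb₁ k
      _ = (1 + A) * (2 * q) ^ k := by field_simp; ring
  have htail : ∀ k, ‖f (k + 3)‖ ≤ a * q ^ k := fun k => by
    have hb := hb₃ (k + 3) (by omega)
    rw [Nat.add_sub_cancel] at hb
    calc ‖f (k + 3)‖ = ‖c‖ ^ (k + 3) * |∫ ω, X ω ^ (k + 3) ∂μ| / (k + 3).factorial := by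
          simp [f]
      _ ≤ ‖c‖ ^ (k + 3) * (D * (k + 3).factorial * M ^ k * ∫ ω, |X ω| ^ 3 ∂μ)
            / (k + 3).factorial := by gcongr
      _ = a * q ^ k := by field_simp; ring
  have hsplit : ∫ ω, Complex.exp (c * X ω) ∂μ
      - (1 + c * (∫ ω, X ω ∂μ : ℝ) + c ^ 2 * (∫ ω, X ω ^ 2 ∂μ : ℝ) / 2) = ∑' k, f (k + 3) := by
    rw [← hf.tsum_eq, ← hf.summable.sum_add_tsum_nat_add 3]
    simp [f, Finset.sum_range_succ]
  rw [hsplit]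
  calc ‖∑' k, f (k + 3)‖ ≤ a * (1 - q)⁻¹ :=
        tsum_of_norm_bounded ((hasSum_geometric_of_lt_one hq (by linarith)).mul_left a) htail
    _ ≤ a * 2 := by
        gcongr
        rw [inv_le_comm₀ (by linarith) two_pos]
        linarith
    _ = 2 * D * ‖c‖ ^ 3 * ∫ ω, |X ω| ^ 3 ∂μ := by ring

end Moments

theorem norm_one_add_mul_cexp_neg_sub_one_le {w : ℂ} (hw : ‖w‖ ≤ 1) :
    ‖(1 + w) * Complex.exp (-w) - 1‖ ≤ 3 * ‖w‖ ^ 2 := by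
  have h₁ := Complex.norm_exp_sub_one_sub_id_le (x := -w) (by rwa [norm_neg])
  have h₂ := Complex.norm_exp_sub_one_le (x := -w) (by rwa [norm_neg])
  rw [norm_neg] at h₁ h₂
  calc ‖(1 + w) * Complex.exp (-w) - 1‖
      = ‖(Complex.exp (-w) - 1 - -w) + w * (Complex.exp (-w) - 1)‖ := by ring_nf
    _ ≤ ‖w‖ ^ 2 + ‖w‖ * (2 * ‖w‖) := by
        grw [norm_add_le, norm_mul, h₁, h₂]
    _ = 3 * ‖w‖ ^ 2 := by ring

theorem norm_cexp_neg_le_three {w : ℂ} (hw : ‖w‖ ≤ 1) : ‖Complex.exp (-w)‖ ≤ 3 :=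
  calc ‖Complex.exp (-w)‖ ≤ Real.exp ‖-w‖ := Complex.norm_exp_le_exp_norm _
    _ ≤ Real.exp 1 := by rwa [norm_neg, Real.exp_le_exp]
    _ ≤ 3 := Real.exp_one_lt_three.le

theorem norm_sum_cexp_neg_mul_sub_one_le {ι : Type*} [Fintype ι] {w c : ℂ} (hw : ‖w‖ ≤ 1)
    (φ m₁ m₂ : ι → ℂ) (hm₁ : ∑ i, m₁ i = 0)
    (hm₂ : c ^ 2 * ∑ i, m₂ i = 2 * Fintype.card ι * w) :
    ‖∑ i, (Complex.exp (-w) * φ i - 1)‖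
      ≤ 3 * Fintype.card ι * ‖w‖ ^ 2 + 3 * ∑ i, ‖φ i - (1 + c * m₁ i + c ^ 2 * m₂ i / 2)‖ := by
  set E := Complex.exp (-w)
  set R := fun i => φ i - (1 + c * m₁ i + c ^ 2 * m₂ i / 2)
  have hsum : ∑ i, (E * φ i - 1) = Fintype.card ι * ((1 + w) * E - 1) + E * ∑ i, R i := by
    have hterm : ∀ i, E * φ i - 1
        = (E - 1) + E * c * m₁ i + E * c ^ 2 / 2 * m₂ i + E * R i := fun i => by
      simp only [R]; ring
    simp only [hterm, Finset.sum_add_distrib, ← Finset.mul_sum, hm₁, Finset.sum_const,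
      Finset.card_univ, nsmul_eq_mul]
    linear_combination (E / 2) * hm₂
  rw [hsum]
  calc ‖Fintype.card ι * ((1 + w) * E - 1) + E * ∑ i, R i‖
      ≤ Fintype.card ι * (3 * ‖w‖ ^ 2) + 3 * ∑ i, ‖R i‖ := by
        grw [norm_add_le, norm_mul, norm_mul, Complex.norm_natCast,
          norm_one_add_mul_cexp_neg_sub_one_le hw, norm_cexp_neg_le_three hw, norm_sum_le]
    _ = 3 * Fintype.card ι * ‖w‖ ^ 2 + 3 * ∑ i, ‖R i‖ := by ring

section GaussianScale

variable {s : ℝ} {z : ℂ}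

theorem norm_sq_div_two_mul_le_one (hs : 0 < s) (hz : ‖z‖ ≤ √s / 8) :
    ‖z ^ 2 / (2 * s)‖ ≤ 1 := by
  have hz_sq : ‖z‖ ^ 2 ≤ s / 64 := by
    calc ‖z‖ ^ 2 ≤ (√s / 8) ^ 2 := by gcongr
      _ = s / 64 := by rw [div_pow, Real.sq_sqrt hs.le]; norm_num
  simp only [norm_div, norm_pow, norm_mul, Complex.norm_real, Real.norm_eq_abs,
    abs_of_pos hs, Complex.norm_ofNat]
  rw [div_le_one (by positivity)]
  linarith

theorem three_mul_sq_mul_norm_sq_div_two_mul_sq_le (hs : 0 < s) (hz : ‖z‖ ≤ √s / 8) :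
    3 * s ^ 2 * ‖z ^ 2 / (2 * s)‖ ^ 2 ≤ ‖z‖ ^ 3 * √s := by
  simp only [norm_div, norm_pow, norm_mul, Complex.norm_real, Real.norm_eq_abs,
    abs_of_pos hs, Complex.norm_ofNat]
  calc 3 * s ^ 2 * (‖z‖ ^ 2 / (2 * s)) ^ 2 = 3 / 4 * ‖z‖ ^ 3 * ‖z‖ := by
        field_simp; ring
    _ ≤ 3 / 4 * ‖z‖ ^ 3 * (√s / 8) := by gcongr
    _ ≤ ‖z‖ ^ 3 * √s := by nlinarith [norm_nonneg z, Real.sqrt_nonneg s, pow_nonneg (norm_nonneg z) 3]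

end GaussianScale

theorem norm_sum_sum_cexp_neg_mul_integral_sub_one_le {Ω : Type*} [MeasurableSpace Ω]
    {μ : Measure Ω} [IsProbabilityMeasure μ] {n : ℕ} {X : Fin n → Fin n → Ω → ℝ}
    (hX : ∀ i j, AEStronglyMeasurable (X i j) μ)
    (hint : ∀ i j (k : ℕ), Integrable (fun ω => |X i j ω| ^ k) μ) {D M B : ℝ} (hD : 0 ≤ D)
    (hM : 0 < M) (hB : 0 < B) (hB_def : B = (1 / n : ℝ) * ∑ i, ∑ j, ∫ ω, X i j ω ^ 2 ∂μ)
    (hb₁ : ∀ i j (k : ℕ), 1 ≤ k →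
      |∫ ω, X i j ω ^ k ∂μ| ≤ D * k.factorial * M ^ (k - 1) * ∫ ω, |X i j ω| ∂μ)
    (hb₃ : ∀ i j (k : ℕ), 3 ≤ k →
      |∫ ω, X i j ω ^ k ∂μ| ≤ D * k.factorial * M ^ (k - 3) * ∫ ω, |X i j ω| ^ 3 ∂μ)
    (hrow : ∀ i, ∑ j, ∫ ω, X i j ω ∂μ = 0) {z : ℂ} (hc : ‖z / (√B : ℂ)‖ * M < 1 / 2)
    (hw : ‖z ^ 2 / (2 * n)‖ ≤ 1) :
    ‖∑ i, ∑ j, (Complex.exp (-z ^ 2 / (2 * n)) *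
        (∫ ω, Complex.exp (z * (X i j ω : ℂ) / (√B : ℂ)) ∂μ) - 1)‖
      ≤ 3 * n ^ 2 * ‖z ^ 2 / (2 * n)‖ ^ 2
        + 6 * D * ‖z / (√B : ℂ)‖ ^ 3 * ∑ i, ∑ j, ∫ ω, |X i j ω| ^ 3 ∂μ := by
  rcases Nat.eq_zero_or_pos n with rfl | hn
  · simp
  set c : ℂ := z / (√B : ℂ)
  set w : ℂ := z ^ 2 / (2 * n)
  have hm₁ : ∑ p : Fin n × Fin n, ((∫ ω, X p.1 p.2 ω ∂μ : ℝ) : ℂ) = 0 := by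
    rw [Fintype.sum_prod_type]
    exact_mod_cast Finset.sum_eq_zero fun i _ => hrow i
  have hm₂ : c ^ 2 * ∑ p : Fin n × Fin n, ((∫ ω, X p.1 p.2 ω ^ 2 ∂μ : ℝ) : ℂ)
      = 2 * Fintype.card (Fin n × Fin n) * w := by
    have hsq_sum : ∑ i, ∑ j, ∫ ω, X i j ω ^ 2 ∂μ = n * B := by rw [hB_def]; field_simp
    have hB' : ((√B : ℂ)) ^ 2 = B := by exact_mod_cast Real.sq_sqrt hB.le
    have hB₀ : (B : ℂ) ≠ 0 := by exact_mod_cast hB.ne'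
    rw [Fintype.sum_prod_type, show ∑ i, ∑ j, ((∫ ω, X i j ω ^ 2 ∂μ : ℝ) : ℂ) = n * B by
      exact_mod_cast hsq_sum]
    simp only [c, w, div_pow, hB', Fintype.card_prod, Fintype.card_fin]
    push_cast
    field_simp
  have hsum : ∑ i, ∑ j, (Complex.exp (-z ^ 2 / (2 * n)) *
        (∫ ω, Complex.exp (z * (X i j ω : ℂ) / (√B : ℂ)) ∂μ) - 1)
      = ∑ p : Fin n × Fin n, (Complex.exp (-w) * ∫ ω, Complex.exp (c * X p.1 p.2 ω) ∂μ - 1) := by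
    rw [Fintype.sum_prod_type]
    simp only [c, w, neg_div, mul_div_right_comm z]
  rw [hsum]
  grw [norm_sum_cexp_neg_mul_sub_one_le hw _ _ _ hm₁ hm₂, Finset.sum_le_sum fun p _ =>
    norm_integral_cexp_mul_sub_taylor_le (hX p.1 p.2) (hint p.1 p.2) hD hM hc (hb₁ p.1 p.2)
      (hb₃ p.1 p.2)]
  rw [← Finset.mul_sum, Fintype.sum_prod_type, Fintype.card_prod, Fintype.card_fin]
  push_cast
  linarith

/-- Full-sum bound (140): under the centering condition (10) and the Bernstein-type
condition (bern), with `b_{nij}(z) = e^{−z²/(2n)} E e^{z X_{nij}/√B_n} − 1` there is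
`C₃ > 0` depending only on `D` such that for `|z| ≤ min{√n, √B_n/M_n}/8`,
`|Σ_{i,j} b_{nij}(z)| ≤ C₃ |z|³ √n (1 + (1/(√n B_n^{3/2})) Σ_{i,j} E|X_{nij}|³)`. -/
theorem full_sum_b_bound (D : ℝ) (hD : 0 < D) :
    ∃ C₃ > (0 : ℝ),
      ∀ (Ω : Type) (_ : MeasurableSpace Ω) (μ : Measure Ω), IsProbabilityMeasure μ →
      ∀ (n : ℕ), 2 ≤ n →
      ∀ (X : Fin n → Fin n → Ω → ℝ), (∀ i j, Measurable (X i j)) →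
      (∀ i j (k : ℕ), Integrable (fun ω => |X i j ω| ^ k) μ) →
      ∀ (M B : ℝ), 0 < M → 0 < B →
      B = (1 / n : ℝ) * ∑ i, ∑ j, ∫ ω, (X i j ω) ^ 2 ∂μ →
      (∀ s ∈ ({1, 2, 3} : Set ℕ), ∀ k : ℕ, s ≤ k → ∀ i j,
        |∫ ω, X i j ω ^ k ∂μ|
          ≤ D * (Nat.factorial k) * M ^ (k - s) * ∫ ω, |X i j ω| ^ s ∂μ) →
      (∀ j, ∑ i, ∫ ω, X i j ω ∂μ = 0) → (∀ i, ∑ j, ∫ ω, X i j ω ∂μ = 0) →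
      ∀ z : ℂ, ‖z‖ ≤ min (Real.sqrt n) (Real.sqrt B / M) / 8 →
        ‖∑ i, ∑ j, (Complex.exp (-z ^ 2 / (2 * n)) *
              (∫ ω, Complex.exp (z * (X i j ω : ℂ) / (Real.sqrt B : ℂ)) ∂μ) - 1)‖
          ≤ C₃ * ‖z‖ ^ 3 * Real.sqrt n *
              (1 + (1 / (Real.sqrt n * B ^ ((3 : ℝ) / 2))) *
                ∑ i, ∑ j, ∫ ω, |X i j ω| ^ 3 ∂μ) := by
  refine ⟨1 + 6 * D, by positivity, ?_⟩
  intro Ω _ μ _ n hn X hX hint M B hM hB hB_def hbern _ hrow z hz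
  have hn₀ : (0 : ℝ) < n := by exact_mod_cast (by omega : 0 < n)
  have hz_n : ‖z‖ ≤ √n / 8 := hz.trans (by gcongr; exact min_le_left _ _)
  have hz_B : ‖z‖ ≤ √B / M / 8 := hz.trans (by gcongr; exact min_le_right _ _)
  have hc : ‖z / (√B : ℂ)‖ = ‖z‖ / √B := by simp [abs_of_nonneg (Real.sqrt_nonneg B)]
  have hcM : ‖z / (√B : ℂ)‖ * M < 1 / 2 := by
    rw [hc]
    calc ‖z‖ / √B * M ≤ √B / M / 8 / √B * M := by gcongr
      _ = 1 / 8 := by field_simp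
      _ < 1 / 2 := by norm_num
  have hgauss := three_mul_sq_mul_norm_sq_div_two_mul_sq_le hn₀ hz_n
  rw [Complex.ofReal_natCast] at hgauss
  set S₃ := ∑ i, ∑ j, ∫ ω, |X i j ω| ^ 3 ∂μ
  set T := 1 / (√n * B ^ ((3 : ℝ) / 2)) * S₃
  have hcube : 6 * D * ‖z / (√B : ℂ)‖ ^ 3 * S₃ = ‖z‖ ^ 3 * √n * (6 * D * T) := by
    have hB32 : B ^ ((3 : ℝ) / 2) = √B ^ 3 := by
      rw [Real.sqrt_eq_rpow, ← Real.rpow_natCast, ← Real.rpow_mul hB.le]; norm_num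
    simp only [hc, T, hB32]
    field_simp
  calc _ ≤ 3 * n ^ 2 * ‖z ^ 2 / (2 * n)‖ ^ 2 + 6 * D * ‖z / (√B : ℂ)‖ ^ 3 * S₃ :=
        norm_sum_sum_cexp_neg_mul_integral_sub_one_le (fun i j => (hX i j).aestronglyMeasurable)
          hint hD.le hM hB hB_def (fun i j k hk => by simpa using hbern 1 (by simp) k hk i j)
          (fun i j k hk => hbern 3 (by simp) k hk i j) hrow hcM
          (by simpa using norm_sq_div_two_mul_le_one hn₀ hz_n)
    _ ≤ ‖z‖ ^ 3 * √n * (1 + 6 * D * T) := by rw [hcube]; nlinarith [hgauss]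
    _ ≤ (1 + 6 * D) * ‖z‖ ^ 3 * √n * (1 + T) := by
        nlinarith [mul_nonneg (by positivity : 0 ≤ ‖z‖ ^ 3 * √n) (by positivity : 0 ≤ T + 6 * D)]
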